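/- arXiv:1002.1432 — 2 statements merged into one kernel-verified Lean document; each statement's English description precedes it below -/
import Mathlib

section
/- Let F be a differential field of characteristic zero, let E be an iterated antiderivative extension of F, and let K be a differential subfield of E with K ⊇ F. If u ∈ E is a nonzero element such that u′/u ∈ K, then u ∈ K. -/
/-- A derivation on a field: an additive map satisfying the Leibniz rule. -/
def IsDeriv {E : Type*} [Field E] (D : E → E) : Prop :=
  (∀ x y : E, D (x + y) = D x + D y) ∧ ∀ x y : E, D (x * y) = D x * y + x * D y

/-- A subfield closed under the derivation, i.e. a differential subfield. -/
def IsDiffSubfield {E : Type*} [Field E] (D : E → E) (K : Subfield E) : Prop :=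
  ∀ x ∈ K, D x ∈ K

/-- The subfield generated by a subfield `F` together with a set `S`, i.e. `F(S)`. -/
def adjoinSF {E : Type*} [Field E] (F : Subfield E) (S : Set E) : Subfield E :=
  Subfield.closure (↑F ∪ S)

/-- `ζ 0, …, ζ (n-1)` are iterated antiderivatives of `F`:
`(ζ i)' ∈ F(ζ 0, …, ζ (i-1))` for every `i`. -/
def IsIterAntideriv {E : Type*} [Field E] (D : E → E) (F : Subfield E) {n : ℕ}
    (ζ : Fin n → E) : Prop :=
  ∀ i, D (ζ i) ∈ adjoinSF F (ζ '' {j | j < i})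

/-- `M` is a no new constants extension of `K`: the constants of `M` are exactly
the constants of `K`. -/
def NoNewConstants {E : Type*} [Field E] (D : E → E) (K M : Subfield E) : Prop :=
  K ≤ M ∧ ∀ x ∈ M, D x = 0 → x ∈ K

/-- `K` is an iterated antiderivative extension of `F`. -/
def IsIAE {E : Type*} [Field E] (D : E → E) (F K : Subfield E) : Prop :=
  NoNewConstants D F K ∧
    ∃ (n : ℕ) (ζ : Fin n → E), IsIterAntideriv D F ζ ∧ K = adjoinSF F (Set.range ζ)

/-- `K` is an antiderivative extension of `F`. -/
def IsAE {E : Type*} [Field E] (D : E → E) (F K : Subfield E) : Prop :=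
  NoNewConstants D F K ∧
    ∃ (n : ℕ) (ζ : Fin n → E), (∀ i, D (ζ i) ∈ (F : Set E)) ∧ K = adjoinSF F (Set.range ζ)

/-- A differential automorphism of `E` over `F`: a field automorphism fixing `F`
pointwise and commuting with the derivation. -/
def IsDiffAut {E : Type*} [Field E] (D : E → E) (F : Subfield E) (σ : E ≃+* E) : Prop :=
  (∀ x ∈ F, σ x = x) ∧ ∀ y : E, σ (D y) = D (σ y)

/-- `M` is a minimal differential field extension of `K`. -/
def IsMinimalDiffExt {E : Type*} [Field E] (D : E → E) (K M : Subfield E) : Prop :=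
  IsDiffSubfield D M ∧ K < M ∧
    ∀ L : Subfield E, IsDiffSubfield D L → K ≤ L → L ≤ M → L = K ∨ L = M

/-- The field of constants of a differential subfield `F`. -/
def constantsOf {E : Type*} [Field E] (D : E → E) (hD : IsDeriv D) (F : Subfield E) :
    Subfield E where
  carrier := {x : E | x ∈ F ∧ D x = 0}
  zero_mem' := by
    refine ⟨F.zero_mem, ?_⟩
    have h := hD.1 0 0
    simp only [add_zero] at h
    exact left_eq_add.mp h
  one_mem' := by
    refine ⟨F.one_mem, ?_⟩
    have h := hD.2 1 1
    simp only [mul_one, one_mul] at h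
    exact left_eq_add.mp h
  add_mem' := by
    rintro a b ⟨haF, ha⟩ ⟨hbF, hb⟩
    exact ⟨F.add_mem haF hbF, by rw [hD.1 a b, ha, hb, add_zero]⟩
  mul_mem' := by
    rintro a b ⟨haF, ha⟩ ⟨hbF, hb⟩
    exact ⟨F.mul_mem haF hbF, by rw [hD.2 a b, ha, hb, zero_mul, mul_zero, add_zero]⟩
  neg_mem' := by
    rintro a ⟨haF, ha⟩
    refine ⟨F.neg_mem haF, ?_⟩
    have h0 : D 0 = 0 := by
      have h := hD.1 0 0
      simp only [add_zero] at h
      exact left_eq_add.mp h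
    have h := hD.1 a (-a)
    rw [add_neg_cancel, h0, ha, zero_add] at h
    exact h.symm
  inv_mem' := by
    rintro a ⟨haF, ha⟩
    refine ⟨F.inv_mem haF, ?_⟩
    by_cases h0 : a = 0
    · subst h0; rw [inv_zero]; exact ha
    · have h1 : D 1 = 0 := by
        have h := hD.2 1 1
        simp only [mul_one, one_mul] at h
        exact left_eq_add.mp h
      have h := hD.2 a a⁻¹
      rw [mul_inv_cancel₀ h0, h1, ha, zero_mul, zero_add] at h
      rcases mul_eq_zero.mp h.symm with h' | h'
      · exact absurd h' h0
      · exact h'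

/-- The antiderivative closure of `L` in `E`: the subfield generated over `L`
by all antiderivatives of `L` lying in `E`. -/
def adCl {E : Type*} [Field E] (D : E → E) (L : Subfield E) : Subfield E :=
  adjoinSF L {x : E | D x ∈ L}

/-- The differential subfield generated by `F` and `u`, i.e. `F⟨u⟩ = F(u, u', u'', …)`. -/
def diffAdjoin {E : Type*} [Field E] (D : E → E) (F : Subfield E) (u : E) : Subfield E :=
  sInf {M : Subfield E | IsDiffSubfield D M ∧ F ≤ M ∧ u ∈ M}

/-- The transcendence degree of `K` over `F` (both viewed inside an ambient field `E`):
the supremum of cardinalities of subsets of `K` that are algebraically independent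
over `F`. -/
noncomputable def trdegSF {E : Type*} [Field E] (F K : Subfield E) : Cardinal :=
  ⨆ s : {s : Set E // s ⊆ (K : Set E) ∧ AlgebraicIndependent F ((↑) : s → E)},
    Cardinal.mk s.1

/-!
Induct on the number of antiderivatives, peeling off the last one. This reduces the theorem to a
single step: if `M` is a differential field containing all constants, `t′ ∈ M` and `u ∈ M(t)` is
nonzero with `u′ / u = w ∈ M`, then `u ∈ M`.

If `t` is algebraic over `M`, the derivation `δ` of `M[X]` extending that of `M` with `X′ = t′`
lowers the degree of the minimal polynomial `p` of `t`, and `δ p` vanishes at `t`, so `δ p = 0`;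
its coefficient of `X ^ (deg p - 1)` says that `t + p_{deg p - 1} / deg p` is a constant, so
`t ∈ M` and `M(t) = M`. If `t` is transcendental, write `u = P(t) / Q(t)` in lowest terms with
`Q` monic. Then `u′ = w u` lifts to `Q δP - P δQ = w P Q`, so `Q ∣ δQ`, hence `δQ = 0` and
`δP = w P`. The leading coefficient `v` of `P` then satisfies `v′ = w v`, so `u / v` is a constant.
-/

open Polynomial Differential IntermediateField

section ImplicitDeriv

variable {A : Type*} [CommRing A] [Differential A]

lemma coeff_implicitDeriv_C (τ : A) (p : A[X]) (n : ℕ) :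
    (implicitDeriv (C τ) p).coeff n = (p.coeff n)′ + τ * (p.coeff (n + 1) * (n + 1)) := by
  simp [implicitDeriv, coeff_derivative]

lemma degree_implicitDeriv_C_lt [Nontrivial A] (τ : A) {p : A[X]} (hp : p.Monic) :
    (implicitDeriv (C τ) p).degree < p.degree := by
  rw [degree_eq_natDegree hp.ne_zero, degree_lt_iff_coeff_zero]
  intro m hm
  have hm' : p.natDegree ≤ m := by exact_mod_cast hm
  rw [coeff_implicitDeriv_C, coeff_eq_zero_of_natDegree_lt (Nat.lt_succ_of_le hm')]
  rcases hm'.eq_or_lt with h | h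
  · rw [← h, hp.coeff_natDegree]; simp
  · simp [coeff_eq_zero_of_natDegree_lt h]

lemma deriv_leadingCoeff_of_implicitDeriv_eq {τ w : A} {p : A[X]}
    (h : implicitDeriv (C τ) p = C w * p) : p.leadingCoeff′ = w * p.leadingCoeff := by
  simpa [coeff_implicitDeriv_C, coeff_eq_zero_of_natDegree_lt (Nat.lt_succ_self _)] using
    congr_arg (coeff · p.natDegree) h

end ImplicitDeriv

namespace Differential

variable {M E : Type*} [Field M] [Field E] [Algebra M E] [Differential E]

lemma mem_range_of_logDeriv_eq [ContainConstants M E] {u v : E} (hu : u ≠ 0) (hv : v ≠ 0)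
    (hv' : v ∈ (algebraMap M E).range) (h : logDeriv u = logDeriv v) :
    u ∈ (algebraMap M E).range := by
  have hconst : (u / v)′ = 0 := by
    rw [← logDeriv_eq_zero, logDeriv_div u v hu hv, h, sub_self]
  obtain ⟨c, hc⟩ := mem_range_of_deriv_eq_zero M hconst
  obtain ⟨a, rfl⟩ := hv'
  exact ⟨c * a, by rw [map_mul, hc, div_mul_cancel₀ _ hv]⟩

variable [Differential M] [DifferentialAlgebra M E] {t : E} {τ : M}

lemma deriv_aeval_of_deriv_eq (ht : t′ = algebraMap M E τ) (p : M[X]) :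
    (aeval t p)′ = aeval t (implicitDeriv (C τ) p) :=
  deriv_aeval_eq_implicitDeriv t (C τ) (by rw [ht, aeval_C]) p

variable [ContainConstants M E]

lemma mem_range_of_isAlgebraic [CharZero M] (ht : t′ = algebraMap M E τ)
    (halg : IsAlgebraic M t) : t ∈ (algebraMap M E).range := by
  set p := minpoly M t
  have hint : IsIntegral M t := halg.isIntegral
  have hmonic : p.Monic := minpoly.monic hint
  have hδ : implicitDeriv (C τ) p = 0 := by
    refine eq_zero_of_dvd_of_degree_lt (minpoly.dvd M t ?_) (degree_implicitDeriv_C_lt τ hmonic)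
    rw [← deriv_aeval_of_deriv_eq ht, minpoly.aeval, map_zero]
  set e := p.natDegree - 1
  have he : e + 1 = p.natDegree := Nat.sub_add_cancel (minpoly.natDegree_pos hint)
  have hcoeff : (p.coeff e)′ = -((e + 1 : ℕ) * τ) := by
    have := congr_arg (coeff · e) hδ
    simp only [coeff_implicitDeriv_C, he, hmonic.coeff_natDegree, one_mul, coeff_zero] at this
    push_cast
    linear_combination this
  set a : M := p.coeff e / (e + 1 : ℕ)
  have ha : a′ = -τ := by
    rw [Derivation.leibniz_div_const _ _ _ (Derivation.map_natCast _ _), hcoeff, smul_eq_mul,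
      mul_neg, inv_mul_cancel_left₀ (Nat.cast_ne_zero.mpr e.succ_ne_zero)]
  have hconst : (t + algebraMap M E a)′ = 0 := by
    rw [map_add, ht, deriv_algebraMap, ha, map_neg, add_neg_cancel]
  obtain ⟨c, hc⟩ := mem_range_of_deriv_eq_zero M hconst
  exact ⟨c - a, by rw [map_sub, hc, add_sub_cancel_right]⟩

lemma mem_range_of_transcendental {w : M} (ht : t′ = algebraMap M E τ)
    (htr : Transcendental M t) {u : E} (hu : u ∈ M⟮t⟯) (hu0 : u ≠ 0)
    (hlog : logDeriv u = algebraMap M E w) :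
    u ∈ (algebraMap M E).range := by
  set x := (RatFunc.algEquivOfTranscendental t htr).symm ⟨u, hu⟩
  set P := x.num
  set Q := x.denom
  have hinj : ∀ q : M[X], aeval t q = 0 → q = 0 := transcendental_iff.mp htr
  have hQ : aeval t Q ≠ 0 := fun h => x.denom_ne_zero (hinj Q h)
  have huPQ : u * aeval t Q = aeval t P := by
    rw [eq_comm, ← div_eq_iff hQ, ← RatFunc.algEquivOfTranscendental_apply t htr,
      AlgEquiv.apply_symm_apply]
  have hu' : u′ = algebraMap M E w * u := by
    rw [← hlog, logDeriv, div_mul_cancel₀ _ hu0]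
  have hpoly : implicitDeriv (C τ) P * Q - P * implicitDeriv (C τ) Q = C w * (P * Q) := by
    refine sub_eq_zero.mp (hinj _ ?_)
    simp only [map_sub, map_mul, aeval_C, ← deriv_aeval_of_deriv_eq ht, ← huPQ,
      Derivation.leibniz, smul_eq_mul, hu']
    ring
  have hδQ : implicitDeriv (C τ) Q = 0 := by
    refine eq_zero_of_dvd_of_degree_lt ?_ (degree_implicitDeriv_C_lt τ x.monic_denom)
    exact x.isCoprime_num_denom.symm.dvd_of_dvd_mul_left
      ⟨implicitDeriv (C τ) P - C w * P, by linear_combination -hpoly⟩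
  have hδP : implicitDeriv (C τ) P = C w * P :=
    mul_right_cancel₀ x.denom_ne_zero (by linear_combination hpoly + P * hδQ)
  have hP : algebraMap M E P.leadingCoeff ≠ 0 := by
    refine (_root_.map_ne_zero _).mpr (leadingCoeff_ne_zero.mpr fun h => ?_)
    rw [h, map_zero] at huPQ
    exact mul_ne_zero hu0 hQ huPQ
  refine mem_range_of_logDeriv_eq hu0 hP ⟨_, rfl⟩ ?_
  rw [hlog, logDeriv, deriv_algebraMap, deriv_leadingCoeff_of_implicitDeriv_eq hδP, map_mul,
    mul_div_cancel_right₀ _ hP]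

lemma mem_range_of_mem_adjoin_simple [CharZero M] {w : M} (ht : t′ = algebraMap M E τ) {u : E}
    (hu : u ∈ M⟮t⟯) (hu0 : u ≠ 0) (hlog : logDeriv u = algebraMap M E w) :
    u ∈ (algebraMap M E).range := by
  by_cases halg : IsAlgebraic M t
  · rw [adjoin_simple_eq_bot_iff.mpr (mem_bot.mpr (mem_range_of_isAlgebraic ht halg))] at hu
    exact mem_bot.mp hu
  · exact mem_range_of_transcendental ht halg hu hu0 hlog

end Differential

section Subfield

variable {E : Type*} [Field E]

lemma le_adjoinSF (F : Subfield E) (S : Set E) : F ≤ adjoinSF F S :=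
  fun _ hx => Subfield.subset_closure (Or.inl hx)

lemma adjoinSF_le {F L : Subfield E} {S : Set E} (hF : F ≤ L) (hS : S ⊆ L) : adjoinSF F S ≤ L :=
  Subfield.closure_le.mpr (Set.union_subset hF hS)

lemma adjoinSF_mono {F F' : Subfield E} {S S' : Set E} (hF : F ≤ F') (hS : S ⊆ S') :
    adjoinSF F S ≤ adjoinSF F' S' :=
  Subfield.closure_mono (Set.union_subset_union hF hS)

lemma adjoinSF_eq_toSubfield_adjoin (F : Subfield E) (S : Set E) :
    adjoinSF F S = (IntermediateField.adjoin F S).toSubfield := by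
  rw [adjoin_toSubfield, adjoinSF]
  congr
  exact Subtype.range_coe.symm

lemma adjoinSF_insert_le (F : Subfield E) (x : E) (S : Set E) :
    adjoinSF F (insert x S) ≤ adjoinSF (adjoinSF F S) {x} := by
  refine adjoinSF_le ((le_adjoinSF F S).trans (le_adjoinSF _ _)) (Set.insert_subset ?_ ?_)
  · exact Subfield.subset_closure (Or.inr rfl)
  · exact fun y hy => le_adjoinSF _ _ (Subfield.subset_closure (Or.inr hy))

lemma IsIterAntideriv.mono {D : E → E} {F K : Subfield E} {n : ℕ} {ζ : Fin n → E}
    (hζ : IsIterAntideriv D F ζ) (hFK : F ≤ K) : IsIterAntideriv D K ζ :=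
  fun i => adjoinSF_mono hFK subset_rfl (hζ i)

lemma IsIterAntideriv.init {D : E → E} {F : Subfield E} {n : ℕ} {ζ : Fin (n + 1) → E}
    (hζ : IsIterAntideriv D F ζ) : IsIterAntideriv D F (Fin.init ζ) := by
  intro i
  have h := hζ i.castSucc
  rwa [show ζ '' {j | j < i.castSucc} = Fin.init ζ '' {j | j < i} by
    change ζ '' Set.Iio i.castSucc = (ζ ∘ Fin.castSucc) '' Set.Iio i
    rw [Set.image_comp, Fin.image_castSucc_Iio]] at h

end Subfield

namespace IsDeriv

variable {E : Type*} [Field E] {D : E → E}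

def toDerivation (hD : IsDeriv D) : Derivation ℤ E E :=
  Derivation.mk' (AddMonoidHom.mk' D hD.1).toIntLinearMap fun a b => by
    simp [hD.2, smul_eq_mul, mul_comm, add_comm]

@[simp] lemma toDerivation_apply (hD : IsDeriv D) (x : E) : hD.toDerivation x = D x := rfl

def restrict (hD : IsDeriv D) {M : Subfield E} (hM : IsDiffSubfield D M) : Derivation ℤ M M :=
  Derivation.mk' (AddMonoidHom.mk' (fun a : M => (⟨D a, hM a a.2⟩ : M))
    fun a b => Subtype.ext (hD.1 a b)).toIntLinearMap fun a b =>
    Subtype.ext (by simp [hD.2, smul_eq_mul, mul_comm, add_comm])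

lemma isDiffSubfield_adjoinSF (hD : IsDeriv D) {F : Subfield E} {S : Set E}
    (hF : IsDiffSubfield D F) (hS : ∀ s ∈ S, D s ∈ adjoinSF F S) :
    IsDiffSubfield D (adjoinSF F S) := by
  intro x hx
  simp only [← hD.toDerivation_apply]
  induction hx using Subfield.closure_induction with
  | mem x hx => exact hx.elim (fun hx => le_adjoinSF F S (hF x hx)) (hS x)
  | one => simp
  | add x y _ _ hx hy => rw [map_add]; exact add_mem hx hy
  | neg x _ hx => rw [map_neg]; exact neg_mem hx
  | inv x hx' hx =>
    rw [Derivation.leibniz_inv, smul_eq_mul]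
    exact mul_mem (neg_mem (pow_mem (inv_mem hx') 2)) hx
  | mul x y hx' hy' hx hy =>
    rw [Derivation.leibniz, smul_eq_mul, smul_eq_mul]
    exact add_mem (mul_mem hx' hy) (mul_mem hy' hx)

lemma mem_of_mem_adjoinSF_singleton [CharZero E] (hD : IsDeriv D) {M : Subfield E}
    (hM : IsDiffSubfield D M) (hconst : ∀ x, D x = 0 → x ∈ M) {t : E} (ht : D t ∈ M) {u : E}
    (hu0 : u ≠ 0) (hlog : D u / u ∈ M) (hu : u ∈ adjoinSF M {t}) : u ∈ M := by
  let _ : Differential E := ⟨hD.toDerivation⟩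
  let _ : Differential M := ⟨hD.restrict hM⟩
  have _ : DifferentialAlgebra M E := ⟨fun _ => rfl⟩
  have _ : Differential.ContainConstants M E := ⟨fun {x} hx => ⟨⟨x, hconst x hx⟩, rfl⟩⟩
  rw [adjoinSF_eq_toSubfield_adjoin] at hu
  obtain ⟨a, rfl⟩ := Differential.mem_range_of_mem_adjoin_simple (τ := ⟨D t, ht⟩) (w := ⟨_, hlog⟩)
    rfl hu hu0 rfl
  exact a.2

lemma mem_of_mem_adjoinSF_range [CharZero E] (hD : IsDeriv D) {M : Subfield E}
    (hM : IsDiffSubfield D M) (hconst : ∀ x, D x = 0 → x ∈ M) {u : E} (hu0 : u ≠ 0)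
    (hlog : D u / u ∈ M) :
    ∀ {n : ℕ} {ζ : Fin n → E}, IsIterAntideriv D M ζ → u ∈ adjoinSF M (Set.range ζ) → u ∈ M
  | 0, ζ, _, hu => adjoinSF_le le_rfl (by simp [Set.range_eq_empty]) hu
  | n + 1, ζ, hζ, hu => by
    set N := adjoinSF M (Set.range (Fin.init ζ))
    have hMN : M ≤ N := le_adjoinSF _ _
    have hN : IsDiffSubfield D N := hD.isDiffSubfield_adjoinSF hM <| by
      rintro _ ⟨i, rfl⟩
      exact adjoinSF_mono le_rfl (Set.image_subset_range _ _) (hζ.init i)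
    have hlast : D (ζ (Fin.last n)) ∈ N := by
      refine adjoinSF_mono le_rfl ?_ (hζ (Fin.last n))
      rintro _ ⟨j, hj, rfl⟩
      exact ⟨j.castPred hj.ne, by simp [Fin.init]⟩
    rw [← Fin.snoc_init_self ζ, Fin.range_snoc] at hu
    have huN : u ∈ N := hD.mem_of_mem_adjoinSF_singleton hN (fun x hx => hMN (hconst x hx))
      hlast hu0 (hMN hlog) (adjoinSF_insert_le _ _ _ hu)
    exact mem_of_mem_adjoinSF_range hD hM hconst hu0 hlog hζ.init huN

end IsDeriv

theorem statement4_general {E : Type*} [Field E] [CharZero E] (D : E → E) (hD : IsDeriv D)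
    (F K : Subfield E)
    (hK : IsDiffSubfield D K)
    (hIAE : IsIAE D F ⊤) (hFK : F ≤ K)
    (u : E) (hu : u ≠ 0) (hlog : D u / u ∈ K) :
    u ∈ K := by
  obtain ⟨⟨-, hconst⟩, n, ζ, hζ, htop⟩ := hIAE
  refine hD.mem_of_mem_adjoinSF_range hK (fun x hx => hFK (hconst x trivial hx)) hu hlog
    (hζ.mono hFK) (adjoinSF_mono hFK subset_rfl ?_)
  exact htop ▸ Subfield.mem_top u

/-- if `E` (the ambient field, `⊤`) is an iterated antiderivative
extension of `F`, `K ⊇ F` is a differential subfield and `u ∈ E` is nonzero with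
`u'/u ∈ K`, then `u ∈ K`. -/
theorem statement4 {E : Type*} [Field E] [CharZero E] (D : E → E) (hD : IsDeriv D)
    (F K : Subfield E)
    (hF : IsDiffSubfield D F) (hK : IsDiffSubfield D K)
    (hIAE : IsIAE D F ⊤) (hFK : F ≤ K)
    (u : E) (hu : u ≠ 0) (hlog : D u / u ∈ K) :
    u ∈ K :=
  statement4_general D hD F K hK hIAE hFK u hu hlog
end

section
/- Let F be a differential field of characteristic zero with field of constants C, and let E = F(ζ₁,…,ζ_t) be an antiderivative extension of F with ζ₁,…,ζ_t algebraically independent over F. Then every σ ∈ G(E|F) satisfies σ(ζᵢ) = ζᵢ + α_{iσ} for unique constants α_{iσ} ∈ C, and the map σ ↦ (α_{1σ},…,α_{tσ}) is a group isomorphism from G(E|F) onto the additive group (Cᵗ, +); in particular G(E|F) is commutative. -/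
/-! If `σ` is a differential automorphism over `F`, then `(σ ζᵢ - ζᵢ)' = σ(ζᵢ') - ζᵢ' = 0`
because `ζᵢ' ∈ F`, so `σ ζᵢ - ζᵢ` is a constant, and it lies in `F` since there are no new
constants. As `E = F(ζ₁,…,ζ_t)`, these constants determine `σ`, and they add under composition.
Conversely, algebraic independence makes `E` the rational function field over `F` in the `ζᵢ`, on
which `ζᵢ ↦ ζᵢ + βᵢ` extends to an `F`-automorphism; for constants `βᵢ` it commutes with the
derivation because two derivations of a field that agree on a generating set agree everywhere. -/

open MvPolynomial

def IsDeriv.toDerivation_s9 {E : Type*} [Field E] {D : E → E} (hD : IsDeriv D) :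
    Derivation ℤ E E :=
  Derivation.mk' (AddMonoidHom.mk' D hD.1).toIntLinearMap fun x y => by
    simp only [AddMonoidHom.coe_toIntLinearMap, AddMonoidHom.mk'_apply, smul_eq_mul, hD.2]
    ring

@[simp]
theorem IsDeriv.toDerivation_apply_s9 {E : Type*} [Field E] {D : E → E} (hD : IsDeriv D) (x : E) :
    hD.toDerivation_s9 x = D x := rfl

namespace Derivation

variable {K M : Type*} [Field K] [AddCommGroup M] [Module K M]

theorem eqOn_field_closure {D₁ D₂ : Derivation ℤ K M} {s : Set K} (h : Set.EqOn D₁ D₂ s) :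
    Set.EqOn D₁ D₂ (Subfield.closure s) := by
  intro x hx
  induction hx using Subfield.closure_induction with
  | mem x hx => exact h hx
  | one => simp
  | add x y _ _ hx hy => simp [hx, hy]
  | neg x _ hx => simp [hx]
  | inv x _ hx => simp [leibniz_inv, hx]
  | mul x y _ _ hx hy => simp [leibniz, hx, hy]

def conj (D : Derivation ℤ K K) (σ : K ≃+* K) : Derivation ℤ K K :=
  Derivation.mk'
    (σ.symm.toAddMonoidHom.comp (D.toAddMonoidHom.comp σ.toAddMonoidHom)).toIntLinearMap
    fun x y => by simp [leibniz]

@[simp]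
theorem conj_apply (D : Derivation ℤ K K) (σ : K ≃+* K) (x : K) :
    D.conj σ x = σ.symm (D (σ x)) := rfl

end Derivation

theorem IsDeriv.map_deriv_eq_of_closure_eq_top {E : Type*} [Field E] {D : E → E} (hD : IsDeriv D)
    (σ : E ≃+* E) {s : Set E} (hs : Subfield.closure s = ⊤)
    (h : ∀ x ∈ s, σ (D x) = D (σ x)) (y : E) : σ (D y) = D (σ y) := by
  have hy : hD.toDerivation_s9 y = hD.toDerivation_s9.conj σ y :=
    Derivation.eqOn_field_closure (fun x hx => by simp [← h x hx]) (hs ▸ Subfield.mem_top y)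
  simpa using congrArg σ hy

namespace MvPolynomial

noncomputable def translate {R ι : Type*} [CommRing R] (b : ι → R) :
    MvPolynomial ι R ≃ₐ[R] MvPolynomial ι R :=
  AlgEquiv.ofAlgHom (aeval fun i => X i + C (b i)) (aeval fun i => X i - C (b i))
    (algHom_ext fun i => by simp) (algHom_ext fun i => by simp)

@[simp]
theorem translate_X {R ι : Type*} [CommRing R] (b : ι → R) (i : ι) :
    translate b (X i) = X i + C (b i) := by
  simp [translate]

end MvPolynomial

theorem AlgebraicIndependent.exists_algEquiv_apply_eq_add {ι F E : Type*} [Field F] [Field E]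
    [Algebra F E] {x : ι → E} (hx : AlgebraicIndependent F x)
    (htop : IntermediateField.adjoin F (Set.range x) = ⊤) (b : ι → F) :
    ∃ σ : E ≃ₐ[F] E, ∀ i, σ (x i) = x i + algebraMap F E (b i) := by
  let e : FractionRing (MvPolynomial ι F) ≃ₐ[F] E :=
    hx.aevalEquivField.trans ((IntermediateField.equivOfEq htop).trans IntermediateField.topEquiv)
  have he : ∀ p, e (algebraMap _ _ p) = aeval x p := fun p =>
    hx.aevalEquivField_algebraMap_apply_coe p
  refine ⟨e.symm.trans ((IsFractionRing.algEquivOfAlgEquiv (translate b)).trans e), fun i => ?_⟩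
  have hxi : e.symm (x i) = algebraMap _ _ (X i : MvPolynomial ι F) := by
    rw [e.symm_apply_eq, he, aeval_X]
  rw [AlgEquiv.trans_apply, AlgEquiv.trans_apply, hxi,
    IsFractionRing.algEquivOfAlgEquiv_algebraMap, he]
  simp

theorem intermediateField_adjoin_eq_top_of_adjoinSF_eq_top {E : Type*} [Field E]
    {F : Subfield E} {S : Set E} (h : adjoinSF F S = ⊤) :
    IntermediateField.adjoin F S = ⊤ := by
  rw [← IntermediateField.toSubfield_inj, IntermediateField.adjoin_toSubfield]
  rwa [adjoinSF, ← Subtype.range_coe (s := (F : Set E))] at h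

namespace IsDiffAut

variable {E : Type*} [Field E] {D : E → E} {F : Subfield E} {σ τ : E ≃+* E}

theorem mul (hσ : IsDiffAut D F σ) (hτ : IsDiffAut D F τ) : IsDiffAut D F (σ * τ) :=
  ⟨fun x hx => by simp [hτ.1 x hx, hσ.1 x hx], fun y => by simp [hτ.2, hσ.2]⟩

theorem deriv_apply_sub_self (hD : IsDeriv D) (hσ : IsDiffAut D F σ) {z : E} (hz : D z ∈ F) :
    D (σ z - z) = 0 := by
  rw [← hD.toDerivation_apply_s9, map_sub, hD.toDerivation_apply_s9, hD.toDerivation_apply_s9, ← hσ.2,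
    hσ.1 _ hz, sub_self]

theorem ext_of_adjoinSF_eq_top {ι : Type*} {ζ : ι → E} (htop : adjoinSF F (Set.range ζ) = ⊤)
    (hσ : IsDiffAut D F σ) (hτ : IsDiffAut D F τ) (h : ∀ i, σ (ζ i) = τ (ζ i)) : σ = τ := by
  have hστ := RingHom.eq_of_eqOn_of_field_closure_eq_top htop
    (f := (σ : E →+* E)) (g := (τ : E →+* E)) (by
      rintro x (hx | ⟨i, rfl⟩)
      · simp [hσ.1 x hx, hτ.1 x hx]
      · exact h i)
  exact RingEquiv.ext fun x => congrArg (· x) hστ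

end IsDiffAut

theorem exists_isDiffAut_apply_eq_add {E ι : Type*} [Field E] {D : E → E} (hD : IsDeriv D)
    {F : Subfield E} (hF : IsDiffSubfield D F) {ζ : ι → E} (hζ : ∀ i, D (ζ i) ∈ F)
    (hind : AlgebraicIndependent F ζ) (htop : adjoinSF F (Set.range ζ) = ⊤)
    (β : ι → E) (hβ : ∀ i, β i ∈ F ∧ D (β i) = 0) :
    ∃ σ : E ≃+* E, IsDiffAut D F σ ∧ ∀ i, σ (ζ i) = ζ i + β i := by
  obtain ⟨σ, hσζ⟩ := hind.exists_algEquiv_apply_eq_add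
    (intermediateField_adjoin_eq_top_of_adjoinSF_eq_top htop) fun i => ⟨β i, (hβ i).1⟩
  have hfix : ∀ x ∈ F, σ x = x := fun x hx => σ.commutes ⟨x, hx⟩
  refine ⟨σ, ⟨hfix, hD.map_deriv_eq_of_closure_eq_top _ htop ?_⟩, hσζ⟩
  rintro x (hx | ⟨i, rfl⟩)
  · simp [hfix _ (hF x hx), hfix x hx]
  · simp only [AlgEquiv.coe_ringEquiv, hσζ, hfix _ (hζ i)]
    change D (ζ i) = D (ζ i + β i)
    rw [hD.1, (hβ i).2, add_zero]

theorem statement9_general {E : Type*} [Field E] (D : E → E) (hD : IsDeriv D)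
    (F : Subfield E) (hF : IsDiffSubfield D F)
    (hNNC : ∀ x : E, D x = 0 → x ∈ F)  -- E is a no new constants extension of F
    (t : ℕ) (ζ : Fin t → E) (hζ : ∀ i, D (ζ i) ∈ F)
    (hind : AlgebraicIndependent F ζ)
    (htop : adjoinSF F (Set.range ζ) = ⊤) :
    ∃ α : (E ≃+* E) → Fin t → E,
      (∀ σ, IsDiffAut D F σ → ∀ i, α σ i ∈ F ∧ D (α σ i) = 0) ∧
      (∀ σ, IsDiffAut D F σ → ∀ i, σ (ζ i) = ζ i + α σ i) ∧
      (∀ σ, IsDiffAut D F σ → ∀ i (β : E), σ (ζ i) = ζ i + β → β = α σ i) ∧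
      (∀ σ τ, IsDiffAut D F σ → IsDiffAut D F τ → α (σ * τ) = α σ + α τ) ∧
      (∀ σ τ, IsDiffAut D F σ → IsDiffAut D F τ → α σ = α τ → σ = τ) ∧
      (∀ β : Fin t → E, (∀ i, β i ∈ F ∧ D (β i) = 0) →
        ∃ σ, IsDiffAut D F σ ∧ α σ = β) ∧
      (∀ σ τ, IsDiffAut D F σ → IsDiffAut D F τ → σ * τ = τ * σ) := by
  set α : (E ≃+* E) → Fin t → E := fun σ i => σ (ζ i) - ζ i
  have hα_const : ∀ σ, IsDiffAut D F σ → ∀ i, α σ i ∈ F ∧ D (α σ i) = 0 := fun σ hσ i =>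
    have h := hσ.deriv_apply_sub_self hD (hζ i)
    ⟨hNNC _ h, h⟩
  have hα_add : ∀ σ τ, IsDiffAut D F σ → IsDiffAut D F τ → α (σ * τ) = α σ + α τ := by
    intro σ τ hσ hτ
    funext i
    have h := hσ.1 _ (hα_const τ hτ i).1
    simp only [α, map_sub] at h
    simp only [α, RingAut.mul_apply, Pi.add_apply]
    linear_combination h
  have hα_inj : ∀ σ τ, IsDiffAut D F σ → IsDiffAut D F τ → α σ = α τ → σ = τ :=
    fun σ τ hσ hτ h =>
      hσ.ext_of_adjoinSF_eq_top htop hτ fun i => sub_left_injective (congrFun h i)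
  refine ⟨α, hα_const, fun σ _ i => (add_sub_cancel _ _).symm, ?_, hα_add, hα_inj, ?_, ?_⟩
  · intro σ _ i β h
    simp [α, h]
  · intro β hβ
    obtain ⟨σ, hσ, hσζ⟩ := exists_isDiffAut_apply_eq_add hD hF hζ hind htop β hβ
    exact ⟨σ, hσ, funext fun i => by simp [α, hσζ]⟩
  · intro σ τ hσ hτ
    refine hα_inj _ _ (hσ.mul hτ) (hτ.mul hσ) ?_
    rw [hα_add σ τ hσ hτ, hα_add τ σ hτ hσ, add_comm]

/-- for an antiderivative extension `E = F(ζ₁,…,ζ_t)` (the ambient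
field, `⊤`) with `ζᵢ` algebraically independent over `F`, every differential
automorphism `σ` over `F` satisfies `σ(ζᵢ) = ζᵢ + α_{iσ}` for unique constants
`α_{iσ}`, and `σ ↦ (α_{1σ},…,α_{tσ})` is a bijective homomorphism from `G(E|F)`
onto the additive group of `t`-tuples of constants; in particular `G(E|F)` is
commutative. -/
theorem statement9 {E : Type*} [Field E] [CharZero E] (D : E → E) (hD : IsDeriv D)
    (F : Subfield E) (hF : IsDiffSubfield D F)
    (hNNC : ∀ x : E, D x = 0 → x ∈ F)  -- E is a no new constants extension of F
    (t : ℕ) (ζ : Fin t → E) (hζ : ∀ i, D (ζ i) ∈ F)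
    (hind : AlgebraicIndependent F ζ)
    (htop : adjoinSF F (Set.range ζ) = ⊤) :
    ∃ α : (E ≃+* E) → Fin t → E,
      (∀ σ, IsDiffAut D F σ → ∀ i, α σ i ∈ F ∧ D (α σ i) = 0) ∧
      (∀ σ, IsDiffAut D F σ → ∀ i, σ (ζ i) = ζ i + α σ i) ∧
      (∀ σ, IsDiffAut D F σ → ∀ i (β : E), σ (ζ i) = ζ i + β → β = α σ i) ∧
      (∀ σ τ, IsDiffAut D F σ → IsDiffAut D F τ → α (σ * τ) = α σ + α τ) ∧
      (∀ σ τ, IsDiffAut D F σ → IsDiffAut D F τ → α σ = α τ → σ = τ) ∧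
      (∀ β : Fin t → E, (∀ i, β i ∈ F ∧ D (β i) = 0) →
        ∃ σ, IsDiffAut D F σ ∧ α σ = β) ∧
      (∀ σ τ, IsDiffAut D F σ → IsDiffAut D F τ → σ * τ = τ * σ) :=
  statement9_general D hD F hF hNNC t ζ hζ hind htop
end
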